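/- One has $\frac{\sqrt{2}+1}{2}\int_{-\pi}^{\pi}\int_{-\pi}^{\pi} \frac{\big(1 - B(k_1)e^{ik_2}\big)\big(e^{-ik_2} - 1\big)}{2 - \cos k_1 - \cos k_2}\,\frac{dk_1\,dk_2}{(2\pi)^2} \;=\; -\frac{\sqrt{2}}{2} - \frac{1}{\pi}$, where the double integral is the Bochner integral of the complex-valued integrand over $[-\pi,\pi]^2$ with respect to Lebesgue measure divided by $(2\pi)^2$ (the left-hand side is in fact real). -/

import Mathlib

open MeasureTheory Real

/-- `B k = (√2 - 1)(√2 + cos k)`. -/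
noncomputable def B (k : ℝ) : ℝ := (Real.sqrt 2 - 1) * (Real.sqrt 2 + Real.cos k)

/-!
Writing `e^{± i k₂} = cos k₂ ± i sin k₂`, the integrand is
`(1 + B k₁)(cos k₂ - 1)/D + i (B k₁ - 1) sin k₂ / D` with `D = 2 - cos k₁ - cos k₂`. Both parts are
bounded, because `B k₁ - 1 = (√2 - 1)(cos k₁ - 1)`, so Fubini applies. The imaginary part is odd
in `k₂`. For the real part put `a = 2 - cos k₁ > 1` (for `k₁ ≠ 0`): the Poisson kernel gives
`∫ (a - cos k₂)⁻¹ dk₂ = 2π / √(a² - 1)`, hence the inner integral is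
`2π (√((1 - cos k₁)/(3 - cos k₁)) - 1)`. In the half angle `θ = k₁ / 2` the remaining outer
integrand is `(2 - 2(√2 - 1) sin² θ) sin θ / √(2 - cos² θ)`, which has an elementary primitive.
-/

section SymmetricIntervals

variable {E : Type*} [NormedAddCommGroup E] [NormedSpace ℝ E] {f : ℝ → E}

theorem intervalIntegral.integral_neg_self_eq_zero_of_odd (hf : ∀ x, f (-x) = -f x) (a : ℝ) :
    ∫ x in -a..a, f x = 0 := by
  have h := intervalIntegral.integral_comp_neg (a := -a) (b := a) f
  simp only [hf, intervalIntegral.integral_neg, neg_neg] at h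
  rw [eq_comm, ← sub_eq_zero, sub_neg_eq_add, ← two_smul ℝ] at h
  exact (smul_eq_zero.mp h).resolve_left two_ne_zero

theorem intervalIntegral.integral_neg_self_eq_two_smul_of_even (hf : ∀ x, f (-x) = f x)
    (hint : ∀ b c, IntervalIntegrable f volume b c) (a : ℝ) :
    ∫ x in -a..a, f x = (2 : ℝ) • ∫ x in 0..a, f x := by
  have h := intervalIntegral.integral_comp_neg (a := 0) (b := a) f
  simp only [hf, neg_zero] at h
  rw [← intervalIntegral.integral_add_adjacent_intervals (hint (-a) 0) (hint 0 a), ← h, two_smul]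

theorem setIntegral_Icc_eq_intervalIntegral {a b : ℝ} (hab : a ≤ b) :
    ∫ x in Set.Icc a b, f x = ∫ x in a..b, f x := by
  rw [integral_Icc_eq_integral_Ioc, intervalIntegral.integral_of_le hab]

end SymmetricIntervals

lemma abs_div_le_of_abs_le_mul {n d C : ℝ} (hd : 0 ≤ d) (hC : 0 ≤ C) (h : |n| ≤ C * d) :
    |n / d| ≤ C := by
  rw [abs_div, abs_of_nonneg hd]
  exact div_le_of_le_mul₀ hd hC h

lemma cos_lt_one_of_mem_Icc {x : ℝ} (hx : x ∈ Set.Icc (-π) π) (hx0 : x ≠ 0) : cos x < 1 :=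
  (cos_le_one x).lt_of_ne fun h => hx0 <|
    (cos_eq_one_iff_of_lt_of_lt (by linarith [hx.1, pi_pos]) (by linarith [hx.2, pi_pos])).1 h

section PoissonKernel

variable {r : ℝ}

lemma one_sub_mul_cos_pos (hr : |r| < 1) (x : ℝ) : 0 < 1 - r * cos x := by
  have : |r * cos x| < 1 := by
    rw [abs_mul]; exact (mul_le_of_le_one_right (abs_nonneg r) (abs_cos_le_one x)).trans_lt hr
  linarith [(abs_lt.1 this).2]

lemma one_sub_two_mul_cos_add_sq_eq (r x : ℝ) :
    1 - 2 * r * cos x + r ^ 2 = (1 - r * cos x) ^ 2 + (r * sin x) ^ 2 := by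
  linear_combination (-r ^ 2) * sin_sq_add_cos_sq x

lemma one_sub_two_mul_cos_add_sq_pos (hr : |r| < 1) (x : ℝ) :
    0 < 1 - 2 * r * cos x + r ^ 2 := by
  rw [one_sub_two_mul_cos_add_sq_eq]
  have := one_sub_mul_cos_pos hr x
  positivity

-- The primitive is `x + 2 arg (1 - r e^{-ix})`.
lemma hasDerivAt_poissonKernel_primitive (hr : |r| < 1) (x : ℝ) :
    HasDerivAt (fun y => y + 2 * arctan (r * sin y / (1 - r * cos y)))
      ((1 - r ^ 2) / (1 - 2 * r * cos x + r ^ 2)) x := by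
  have hd := one_sub_mul_cos_pos hr x
  have hq : HasDerivAt (fun y => r * sin y / (1 - r * cos y))
      ((r * cos x * (1 - r * cos x) - r * sin x * (r * sin x)) / (1 - r * cos x) ^ 2) x := by
    have hden : HasDerivAt (fun y => 1 - r * cos y) (r * sin x) x := by
      simpa using ((hasDerivAt_cos x).const_mul r).const_sub 1
    exact ((hasDerivAt_sin x).const_mul r).div hden hd.ne'
  refine ((hasDerivAt_id x).add (hq.arctan.const_mul 2)).congr_deriv ?_
  rw [← sub_eq_zero]
  field_simp
  rw [one_sub_two_mul_cos_add_sq_eq]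
  field_simp
  linear_combination (-r ^ 2) * sin_sq_add_cos_sq x

theorem integral_poissonKernel (hr : |r| < 1) :
    ∫ x in -π..π, (1 - r ^ 2) / (1 - 2 * r * cos x + r ^ 2) = 2 * π := by
  have hcont : Continuous fun x => (1 - r ^ 2) / (1 - 2 * r * cos x + r ^ 2) :=
    continuous_const.div (by fun_prop) fun x => (one_sub_two_mul_cos_add_sq_pos hr x).ne'
  rw [intervalIntegral.integral_eq_sub_of_hasDerivAt
    (fun x _ => hasDerivAt_poissonKernel_primitive hr x) (hcont.intervalIntegrable _ _)]
  simp only [sin_pi, sin_neg, mul_zero, neg_zero, zero_div, arctan_zero]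
  ring

end PoissonKernel

section InverseOfShiftedCosine

variable {a : ℝ}

lemma sub_cos_pos (ha : 1 < a) (x : ℝ) : 0 < a - cos x := by linarith [cos_le_one x]

theorem integral_inv_sub_cos (ha : 1 < a) :
    ∫ x in -π..π, (a - cos x)⁻¹ = 2 * π / √(a ^ 2 - 1) := by
  set s := √(a ^ 2 - 1)
  have hs2 : s ^ 2 = a ^ 2 - 1 := sq_sqrt (by nlinarith)
  have hs : 0 < s := sqrt_pos.2 (by nlinarith)
  have hpos : 0 < a - s := by nlinarith
  -- `r = a - s` is the root of `r + r⁻¹ = 2a` in `(0, 1)`.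
  have hr : |a - s| < 1 := abs_lt.2 ⟨by linarith, by nlinarith⟩
  have key : ∀ x, (a - cos x)⁻¹ =
      s⁻¹ * ((1 - (a - s) ^ 2) / (1 - 2 * (a - s) * cos x + (a - s) ^ 2)) := fun x => by
    have := sub_cos_pos ha x
    rw [show 1 - 2 * (a - s) * cos x + (a - s) ^ 2 = 2 * (a - s) * (a - cos x) by
        linear_combination hs2,
      show 1 - (a - s) ^ 2 = 2 * s * (a - s) by linear_combination hs2]
    field_simp
  simp_rw [key, intervalIntegral.integral_const_mul, integral_poissonKernel hr]
  field_simp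

theorem integral_cos_sub_one_div_sub_cos (ha : 1 < a) :
    ∫ x in -π..π, (cos x - 1) / (a - cos x) = 2 * π * (√((a - 1) / (a + 1)) - 1) := by
  have key : ∀ x, (cos x - 1) / (a - cos x) = (a - 1) * (a - cos x)⁻¹ - 1 := fun x => by
    field_simp [(sub_cos_pos ha x).ne']
    ring
  have hint : IntervalIntegrable (fun x => (a - 1) * (a - cos x)⁻¹) volume (-π) π :=
    (continuous_const.mul ((continuous_const.sub continuous_cos).inv₀ fun x =>
      (sub_cos_pos ha x).ne')).intervalIntegrable _ _
  have hsqrt : (a - 1) / √(a ^ 2 - 1) = √((a - 1) / (a + 1)) := by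
    have h1 : 0 < a - 1 := by linarith
    rw [show a ^ 2 - 1 = (a - 1) * (a + 1) by ring, sqrt_mul h1.le, sqrt_div h1.le,
      ← div_div, div_sqrt]
  simp_rw [key]
  rw [intervalIntegral.integral_sub hint intervalIntegrable_const,
    intervalIntegral.integral_const_mul, integral_inv_sub_cos ha, intervalIntegral.integral_const,
    smul_eq_mul, mul_div_left_comm, hsqrt]
  ring

end InverseOfShiftedCosine

lemma one_add_B_eq (k : ℝ) : 1 + B k = 3 - √2 + (√2 - 1) * cos k := by
  rw [B]; linear_combination sq_sqrt (zero_le_two : (0 : ℝ) ≤ 2)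

lemma B_sub_one_eq (k : ℝ) : B k - 1 = (√2 - 1) * (cos k - 1) := by
  rw [B]; linear_combination sq_sqrt (zero_le_two : (0 : ℝ) ≤ 2)

lemma continuous_B : Continuous B := by unfold B; fun_prop

lemma two_sub_cos_sq_pos (x : ℝ) : 0 < 2 - cos x ^ 2 := by
  nlinarith [cos_sq_le_one x]

lemma arcsin_inv_sqrt_two : arcsin (√2)⁻¹ = π / 4 := by
  rw [← arcsin_sin (x := π / 4) (by linarith [pi_pos]) (by linarith [pi_pos]), sin_pi_div_four,
    sqrt_div_self]

lemma one_add_B_mul_sqrt_eq_half_angle {k : ℝ} (hk0 : 0 ≤ k) (hkπ : k ≤ π) :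
    (1 + B k) * √((1 - cos k) / (3 - cos k)) =
      (2 - 2 * (√2 - 1) * sin (k / 2) ^ 2) * (sin (k / 2) / √(2 - cos (k / 2) ^ 2)) := by
  have hs0 : 0 ≤ sin (k / 2) := sin_nonneg_of_nonneg_of_le_pi (by linarith) (by linarith)
  have hcos : cos k = 2 * cos (k / 2) ^ 2 - 1 := by rw [← cos_two_mul]; ring_nf
  have hsc := sin_sq_add_cos_sq (k / 2)
  have hquot : (1 - cos k) / (3 - cos k) = sin (k / 2) ^ 2 / (2 - cos (k / 2) ^ 2) := by
    rw [hcos, div_eq_div_iff (by nlinarith [cos_sq_le_one (k / 2)]) (two_sub_cos_sq_pos _).ne']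
    linear_combination (2 * cos (k / 2) ^ 2 - 4) * hsc
  rw [hquot, sqrt_div (sq_nonneg _), sqrt_sq hs0, one_add_B_eq, hcos]
  linear_combination (2 * (√2 - 1) * (sin (k / 2) / √(2 - cos (k / 2) ^ 2))) * hsc

noncomputable def outerPrimitive (k : ℝ) : ℝ :=
  -4 * arcsin (cos (k / 2) / √2) + 2 * (√2 - 1) * (cos (k / 2) * √(2 - cos (k / 2) ^ 2))

lemma hasDerivAt_outerPrimitive (k : ℝ) :
    HasDerivAt outerPrimitive
      ((2 - 2 * (√2 - 1) * sin (k / 2) ^ 2) * (sin (k / 2) / √(2 - cos (k / 2) ^ 2))) k := by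
  have hroot_pos := sqrt_pos.2 (two_sub_cos_sq_pos (k / 2))
  have hroot_sq : √(2 - cos (k / 2) ^ 2) ^ 2 = 2 - cos (k / 2) ^ 2 :=
    sq_sqrt (two_sub_cos_sq_pos _).le
  have hc : HasDerivAt (fun k => cos (k / 2)) (-sin (k / 2) / 2) k :=
    ((hasDerivAt_cos _).comp k ((hasDerivAt_id k).div_const 2)).congr_deriv
      (by simp [div_eq_mul_inv])
  have hc1 : |cos (k / 2) / √2| < 1 := by
    rw [abs_div, abs_of_pos (sqrt_pos.2 two_pos), div_lt_one (sqrt_pos.2 two_pos)]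
    exact (abs_cos_le_one _).trans_lt one_lt_sqrt_two
  have harcsin := (hasDerivAt_arcsin (abs_lt.1 hc1).1.ne' (abs_lt.1 hc1).2.ne).comp k
    (hc.div_const √2)
  have hroot := ((hc.fun_pow 2).const_sub 2).sqrt (two_sub_cos_sq_pos (k / 2)).ne'
  refine ((harcsin.const_mul (-4)).add ((hc.mul hroot).const_mul (2 * (√2 - 1)))).congr_deriv ?_
  have e : √(1 - (cos (k / 2) / √2) ^ 2) = √(2 - cos (k / 2) ^ 2) / √2 := by
    rw [← sqrt_div' _ zero_le_two, div_pow, sq_sqrt zero_le_two, one_sub_div two_ne_zero]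
  simp only [e]
  field_simp
  linear_combination (4 * sin (k / 2) * (√2 - 1)) * sin_sq_add_cos_sq (k / 2)
    - (2 * sin (k / 2) * (√2 - 1)) * hroot_sq

theorem integral_one_add_B_mul_sqrt_zero_pi :
    ∫ k in 0..π, (1 + B k) * √((1 - cos k) / (3 - cos k)) = π + 2 - 2 * √2 := by
  have hcont : Continuous fun k =>
      (2 - 2 * (√2 - 1) * sin (k / 2) ^ 2) * (sin (k / 2) / √(2 - cos (k / 2) ^ 2)) :=
    .mul (by fun_prop) (.div (by fun_prop) (by fun_prop) fun k =>
      (sqrt_pos.2 (two_sub_cos_sq_pos _)).ne')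
  rw [intervalIntegral.integral_congr fun k hk => one_add_B_mul_sqrt_eq_half_angle
      (Set.uIcc_of_le pi_pos.le ▸ hk).1 (Set.uIcc_of_le pi_pos.le ▸ hk).2,
    intervalIntegral.integral_eq_sub_of_hasDerivAt (fun k _ => hasDerivAt_outerPrimitive k)
      (hcont.intervalIntegrable _ _)]
  have hπ : outerPrimitive π = 0 := by simp [outerPrimitive]
  have h0 : outerPrimitive 0 = 2 * √2 - 2 - π := by
    norm_num [outerPrimitive, arcsin_inv_sqrt_two]
    ring
  rw [hπ, h0]
  ring

lemma continuous_one_add_B_mul_sqrt :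
    Continuous fun k => (1 + B k) * √((1 - cos k) / (3 - cos k)) := by
  have := continuous_B
  refine .mul (by fun_prop) (continuous_sqrt.comp (.div (by fun_prop) (by fun_prop) fun k => ?_))
  linarith [cos_le_one k]

theorem integral_one_add_B_mul_sqrt :
    ∫ k in -π..π, (1 + B k) * √((1 - cos k) / (3 - cos k)) = 2 * (π + 2 - 2 * √2) := by
  rw [intervalIntegral.integral_neg_self_eq_two_smul_of_even (fun k => by simp [B])
    continuous_one_add_B_mul_sqrt.intervalIntegrable, integral_one_add_B_mul_sqrt_zero_pi,
    smul_eq_mul]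

theorem integral_one_add_B : ∫ k in -π..π, (1 + B k) = 2 * π * (3 - √2) := by
  simp_rw [one_add_B_eq]
  rw [intervalIntegral.integral_add intervalIntegrable_const
      (by apply Continuous.intervalIntegrable; fun_prop),
    intervalIntegral.integral_const_mul, integral_cos, intervalIntegral.integral_const,
    smul_eq_mul, sin_neg, sin_pi]
  ring

noncomputable def integrandRe (p : ℝ × ℝ) : ℝ :=
  (1 + B p.1) * (cos p.2 - 1) / (2 - cos p.1 - cos p.2)

noncomputable def integrandIm (p : ℝ × ℝ) : ℝ :=
  (B p.1 - 1) * sin p.2 / (2 - cos p.1 - cos p.2)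

lemma integrand_eq_re_add_im (p : ℝ × ℝ) :
    (1 - (B p.1 : ℂ) * Complex.exp (Complex.I * p.2)) * (Complex.exp (-Complex.I * p.2) - 1) /
        ((2 - cos p.1 - cos p.2 : ℝ) : ℂ) =
      (integrandRe p : ℂ) + Complex.I * (integrandIm p : ℂ) := by
  have hexp : ∀ t : ℝ, Complex.exp (Complex.I * t) = cos t + sin t * Complex.I := fun t => by
    rw [mul_comm, Complex.exp_mul_I, Complex.ofReal_cos, Complex.ofReal_sin]
  have hexp_neg : Complex.exp (-Complex.I * p.2) = cos p.2 - sin p.2 * Complex.I := by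
    rw [neg_mul, ← mul_neg, ← Complex.ofReal_neg, hexp, cos_neg, sin_neg]
    push_cast; ring
  simp only [integrandRe, integrandIm, hexp, hexp_neg]
  push_cast
  rw [← mul_div_assoc, ← add_div]
  congr 1
  linear_combination (-(B p.1 : ℂ)) * Complex.sin_sq_add_cos_sq (p.2 : ℂ)
    + ((B p.1 : ℂ) * Complex.sin p.2 ^ 2) * Complex.I_sq

lemma norm_integrandRe_le (p : ℝ × ℝ) : ‖integrandRe p‖ ≤ 2 := by
  have h1 := cos_le_one p.1
  have h2 := cos_le_one p.2
  have hB : 0 ≤ 1 + B p.1 ∧ 1 + B p.1 ≤ 2 := by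
    rw [one_add_B_eq]
    constructor <;> nlinarith [neg_one_le_cos p.1, one_lt_sqrt_two, sq_sqrt zero_le_two]
  refine abs_div_le_of_abs_le_mul (by linarith) zero_le_two ?_
  rw [abs_mul, abs_of_nonneg hB.1, abs_of_nonpos (by linarith)]
  nlinarith

lemma norm_integrandIm_le (p : ℝ × ℝ) : ‖integrandIm p‖ ≤ 1 := by
  have h1 := cos_le_one p.1
  have h2 := cos_le_one p.2
  refine abs_div_le_of_abs_le_mul (by linarith) zero_le_one ?_
  rw [B_sub_one_eq, abs_mul, abs_mul, abs_of_pos (by linarith [one_lt_sqrt_two] : 0 < √2 - 1),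
    abs_of_nonpos (by linarith : cos p.1 - 1 ≤ 0)]
  have hfac : (√2 - 1) * |sin p.2| ≤ 1 := by
    have : √2 < 2 := by rw [sqrt_lt' two_pos]; norm_num
    nlinarith [abs_sin_le_one p.2, abs_nonneg (sin p.2)]
  nlinarith [mul_le_mul_of_nonneg_right hfac (sub_nonneg.2 h1)]

lemma measurable_integrandRe : Measurable integrandRe := by
  have := continuous_B
  unfold integrandRe
  fun_prop

lemma measurable_integrandIm : Measurable integrandIm := by
  have := continuous_B
  unfold integrandIm
  fun_prop

lemma integrableOn_square_of_norm_le {f : ℝ × ℝ → ℝ} (hf : Measurable f) {C : ℝ}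
    (h : ∀ p, ‖f p‖ ≤ C) : IntegrableOn f (Set.Icc (-π) π ×ˢ Set.Icc (-π) π) :=
  Measure.integrableOn_of_bounded (isCompact_Icc.prod isCompact_Icc).measure_lt_top.ne
    hf.aestronglyMeasurable (ae_of_all _ h)

theorem integral_integrandRe :
    ∫ p in Set.Icc (-π) π ×ˢ Set.Icc (-π) π, integrandRe p =
      4 * √2 * π ^ 2 - 8 * π ^ 2 + 8 * π - 8 * √2 * π := by
  have hint := integrableOn_square_of_norm_le measurable_integrandRe norm_integrandRe_le
  have hpi : -π ≤ π := by linarith [pi_pos]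
  rw [Measure.volume_eq_prod] at hint ⊢
  rw [setIntegral_prod _ hint]
  have inner : ∀ᵐ x, x ∈ Set.Icc (-π) π → ∫ y in Set.Icc (-π) π, integrandRe (x, y) =
      2 * π * ((1 + B x) * √((1 - cos x) / (3 - cos x))) - 2 * π * (1 + B x) := by
    filter_upwards [Measure.ae_ne volume 0] with x hx0 hx
    have ha : 1 < 2 - cos x := by linarith [cos_lt_one_of_mem_Icc hx hx0]
    simp only [integrandRe, mul_div_assoc]
    rw [setIntegral_Icc_eq_intervalIntegral hpi, intervalIntegral.integral_const_mul,
      integral_cos_sub_one_div_sub_cos ha]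
    ring_nf
  rw [setIntegral_congr_ae measurableSet_Icc inner, setIntegral_Icc_eq_intervalIntegral hpi,
    intervalIntegral.integral_sub
      ((continuous_one_add_B_mul_sqrt.intervalIntegrable _ _).const_mul _)
      (((continuous_B.const_add 1).intervalIntegrable _ _).const_mul _),
    intervalIntegral.integral_const_mul, intervalIntegral.integral_const_mul,
    integral_one_add_B_mul_sqrt, integral_one_add_B]
  ring

theorem integral_integrandIm :
    ∫ p in Set.Icc (-π) π ×ˢ Set.Icc (-π) π, integrandIm p = 0 := by
  have hint := integrableOn_square_of_norm_le measurable_integrandIm norm_integrandIm_le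
  rw [Measure.volume_eq_prod] at hint ⊢
  rw [setIntegral_prod _ hint]
  have inner : ∀ x, ∫ y in Set.Icc (-π) π, integrandIm (x, y) = 0 := fun x => by
    rw [setIntegral_Icc_eq_intervalIntegral (by linarith [pi_pos])]
    exact intervalIntegral.integral_neg_self_eq_zero_of_odd
      (fun y => by simp [integrandIm, neg_div]) π
  simp [inner]

/-- The on-diagonal discrete vertical derivative of the critical infinite-plane Ising propagator:
`((√2+1)/2) ∫∫_{[-π,π]²} (1 - B(k₁) e^{i k₂})(e^{-i k₂} - 1)/(2 - cos k₁ - cos k₂)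
   dk₁ dk₂/(2π)² = -√2/2 - 1/π`. -/
theorem stmt_1 :
    ((↑(Real.sqrt 2 + 1) : ℂ) / 2) *
      ((∫ k in (Set.Icc (-π) π ×ˢ Set.Icc (-π) π),
          ((1 - (B k.1 : ℂ) * Complex.exp (Complex.I * (k.2 : ℂ))) *
              (Complex.exp (-Complex.I * (k.2 : ℂ)) - 1)) /
            ((↑(2 - Real.cos k.1 - Real.cos k.2) : ℂ))) / (↑(((2 * π) ^ 2 : ℝ)) : ℂ))
      = (↑(-(Real.sqrt 2) / 2 - 1 / π) : ℂ) := by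
  have hIntegral : ∫ k in Set.Icc (-π) π ×ˢ Set.Icc (-π) π,
      (1 - (B k.1 : ℂ) * Complex.exp (Complex.I * k.2)) * (Complex.exp (-Complex.I * k.2) - 1) /
        ((2 - cos k.1 - cos k.2 : ℝ) : ℂ) =
      ((4 * √2 * π ^ 2 - 8 * π ^ 2 + 8 * π - 8 * √2 * π : ℝ) : ℂ) := by
    have hRe := integrableOn_square_of_norm_le measurable_integrandRe norm_integrandRe_le
    have hIm := integrableOn_square_of_norm_le measurable_integrandIm norm_integrandIm_le
    simp_rw [integrand_eq_re_add_im]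
    rw [integral_add hRe.ofReal (hIm.ofReal.const_mul _), integral_const_mul,
      integral_complex_ofReal, integral_complex_ofReal, integral_integrandRe, integral_integrandIm]
    simp
  have hValue : (√2 + 1) / 2 * ((4 * √2 * π ^ 2 - 8 * π ^ 2 + 8 * π - 8 * √2 * π) / (2 * π) ^ 2) =
      -√2 / 2 - 1 / π := by
    field_simp
    linear_combination (4 * π - 8) * sq_sqrt (zero_le_two : (0 : ℝ) ≤ 2)
  rw [hIntegral]
  exact_mod_cast hValue
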